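/- For the 3D compact 27-point scheme: if u(x,y,z) is any polynomial of total degree ≤ 3, then −(25/(6h²)) u(P) + (5/(12h²)) ∑_{|r|+|s|+|t|=1} u(P + h(r,s,t)) + (1/(8h²)) ∑_{|r|+|s|+|t|=2} u(P + h(r,s,t)) + (1/(48h²)) ∑_{|r|+|s|+|t|=3} u(P + h(r,s,t)) = Δu(P) for all h > 0 and all points P ∈ ℝ³, where offsets (r,s,t) range over {−1,0,1}³. -/

import Mathlib

/-!
With `δ f x = f (x + h) + f (x - h) - 2 f x`, the shift sum `f (x + h) + f (x - h)` is `2 f + δ f`, so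
on a product `f(x) g(y) k(z)` the three shell sums are the elementary symmetric expressions in
`2 + δx`, `2 + δy`, `2 + δz`. The weights of the scheme are exactly those that turn it into
`h⁻² (δx + δy + δz + (δx δy + δy δz + δx δz) / 6 + δx δy δz / 48)`. On a monomial of total degree
at most 3, `δ` acts as `h²` times the second derivative, and every product of two `δ`s vanishes
because one of the two exponents is at most 1. Both sides being linear in `u`, the identity
extends from monomials to all cubics.
-/

noncomputable section

def secondDiff (h : ℝ) (f : ℝ → ℝ) (x : ℝ) : ℝ := f (x + h) + f (x - h) - 2 * f x

def cubeOffsets : Finset (ℤ × ℤ × ℤ) :=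
  ({-1, 0, 1} : Finset ℤ) ×ˢ ({-1, 0, 1} : Finset ℤ) ×ˢ ({-1, 0, 1} : Finset ℤ)

def shell (k : ℤ) : Finset (ℤ × ℤ × ℤ) :=
  cubeOffsets.filter fun q => |q.1| + |q.2.1| + |q.2.2| = k

def shellSum (h : ℝ) (u : ℝ → ℝ → ℝ → ℝ) (x y z : ℝ) (k : ℤ) : ℝ :=
  ∑ q ∈ shell k, u (x + h * q.1) (y + h * q.2.1) (z + h * q.2.2)

def stencil27 (h : ℝ) (u : ℝ → ℝ → ℝ → ℝ) (x y z : ℝ) : ℝ :=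
  -(25 / (6 * h ^ 2)) * u x y z + (5 / (12 * h ^ 2)) * shellSum h u x y z 1
    + (1 / (8 * h ^ 2)) * shellSum h u x y z 2 + (1 / (48 * h ^ 2)) * shellSum h u x y z 3

def laplacian3 (u : ℝ → ℝ → ℝ → ℝ) (x y z : ℝ) : ℝ :=
  deriv^[2] (fun t => u t y z) x + deriv^[2] (fun t => u x t z) y + deriv^[2] (fun t => u x y t) z

end

theorem shell_one : shell 1 =
    {(1, 0, 0), (-1, 0, 0), (0, 1, 0), (0, -1, 0), (0, 0, 1), (0, 0, -1)} := by
  decide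

theorem shell_two : shell 2 =
    {(1, 1, 0), (1, -1, 0), (-1, 1, 0), (-1, -1, 0), (1, 0, 1), (1, 0, -1), (-1, 0, 1),
      (-1, 0, -1), (0, 1, 1), (0, 1, -1), (0, -1, 1), (0, -1, -1)} := by
  decide

theorem shell_three : shell 3 =
    {(1, 1, 1), (1, 1, -1), (1, -1, 1), (1, -1, -1), (-1, 1, 1), (-1, 1, -1), (-1, -1, 1),
      (-1, -1, -1)} := by
  decide

theorem stencil27_mul_mul {h : ℝ} (hh : h ≠ 0) (f g k : ℝ → ℝ) (x y z : ℝ) :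
    stencil27 h (fun a b c => f a * g b * k c) x y z =
      (secondDiff h f x * g y * k z + f x * secondDiff h g y * k z + f x * g y * secondDiff h k z
        + (secondDiff h f x * secondDiff h g y * k z + secondDiff h f x * g y * secondDiff h k z
          + f x * secondDiff h g y * secondDiff h k z) / 6
        + secondDiff h f x * secondDiff h g y * secondDiff h k z / 48) / h ^ 2 := by
  simp (disch := decide) only [stencil27, shellSum, shell_one, shell_two, shell_three, secondDiff,
    Finset.sum_insert, Finset.sum_singleton]
  push_cast
  simp only [mul_one, mul_neg, mul_zero, add_zero, ← sub_eq_add_neg]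
  field_simp
  ring

theorem laplacian3_mul_mul (f g k : ℝ → ℝ) (x y z : ℝ) :
    laplacian3 (fun a b c => f a * g b * k c) x y z =
      deriv^[2] f x * g y * k z + f x * deriv^[2] g y * k z + f x * g y * deriv^[2] k z := by
  simp only [laplacian3, ← iteratedDeriv_eq_iterate, iteratedDeriv_mul_const_field]
  simp only [mul_assoc, iteratedDeriv_const_mul_field]

theorem secondDiff_pow (h x : ℝ) {n : ℕ} (hn : n ≤ 3) :
    secondDiff h (· ^ n) x = h ^ 2 * deriv^[2] (· ^ n) x := by
  interval_cases n <;> simp [secondDiff, iter_deriv_pow] <;> ring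

theorem iter_deriv_two_pow_of_le_one (x : ℝ) {n : ℕ} (hn : n ≤ 1) :
    deriv^[2] (· ^ n) x = 0 := by
  interval_cases n <;> simp

theorem iter_deriv_two_pow_mul_eq_zero (x y : ℝ) {a b : ℕ} (hab : a + b ≤ 3) :
    deriv^[2] (· ^ a) x * deriv^[2] (· ^ b) y = 0 := by
  rcases (by omega : a ≤ 1 ∨ b ≤ 1) with ha | hb
  · rw [iter_deriv_two_pow_of_le_one x ha, zero_mul]
  · rw [iter_deriv_two_pow_of_le_one y hb, mul_zero]

theorem stencil27_monomial_eq_laplacian3 {h : ℝ} (hh : h ≠ 0) {a b c : ℕ} (habc : a + b + c ≤ 3)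
    (x y z : ℝ) :
    stencil27 h (fun s t r => s ^ a * t ^ b * r ^ c) x y z =
      laplacian3 (fun s t r => s ^ a * t ^ b * r ^ c) x y z := by
  rw [stencil27_mul_mul hh (· ^ a) (· ^ b) (· ^ c), laplacian3_mul_mul (· ^ a) (· ^ b) (· ^ c),
    secondDiff_pow h x (by omega), secondDiff_pow h y (by omega), secondDiff_pow h z (by omega)]
  have hab := iter_deriv_two_pow_mul_eq_zero x y (by omega : a + b ≤ 3)
  have hac := iter_deriv_two_pow_mul_eq_zero x z (by omega : a + c ≤ 3)
  have hbc := iter_deriv_two_pow_mul_eq_zero y z (by omega : b + c ≤ 3)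
  rw [div_eq_iff (pow_ne_zero 2 hh)]
  linear_combination (h ^ 4 / 6 * z ^ c + h ^ 6 / 48 * deriv^[2] (· ^ c) z) * hab
    + h ^ 4 / 6 * y ^ b * hac + h ^ 4 / 6 * x ^ a * hbc

theorem stencil27_sum {ι : Type*} (S : Finset ι) (A : ι → ℝ) (F : ι → ℝ → ℝ → ℝ → ℝ)
    (h x y z : ℝ) :
    stencil27 h (fun a b c => ∑ i ∈ S, A i * F i a b c) x y z
      = ∑ i ∈ S, A i * stencil27 h (F i) x y z := by
  simp only [stencil27, shellSum, Finset.mul_sum, Finset.sum_add_distrib, mul_add]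
  rw [Finset.sum_comm (s := shell 1), Finset.sum_comm (s := shell 2), Finset.sum_comm (s := shell 3)]
  simp only [mul_left_comm, mul_neg, Finset.sum_neg_distrib, neg_mul]

theorem laplacian3_sum {ι : Type*} (S : Finset ι) (A : ι → ℝ) (a b c : ι → ℕ) (x y z : ℝ) :
    laplacian3 (fun s t r => ∑ i ∈ S, A i * (s ^ a i * t ^ b i * r ^ c i)) x y z
      = ∑ i ∈ S, A i * laplacian3 (fun s t r => s ^ a i * t ^ b i * r ^ c i) x y z := by
  simp only [laplacian3, ← iteratedDeriv_eq_iterate]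
  rw [iteratedDeriv_fun_sum (fun _ _ => by fun_prop), iteratedDeriv_fun_sum (fun _ _ => by fun_prop),
    iteratedDeriv_fun_sum (fun _ _ => by fun_prop)]
  simp only [iteratedDeriv_const_mul_field, mul_add, Finset.sum_add_distrib]

theorem eval_fin_three_eq_sum_monomials (p : MvPolynomial (Fin 3) ℝ) (s t r : ℝ) :
    MvPolynomial.eval ![s, t, r] p
      = ∑ v ∈ p.support, p.coeff v * (s ^ v 0 * t ^ v 1 * r ^ v 2) := by
  rw [MvPolynomial.eval_eq']
  simp [Fin.prod_univ_three]

theorem exponents_sum_le_totalDegree {p : MvPolynomial (Fin 3) ℝ} {v : Fin 3 →₀ ℕ}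
    (hv : v ∈ p.support) : v 0 + v 1 + v 2 ≤ p.totalDegree := by
  simpa [Finsupp.sum_fintype, Fin.sum_univ_three] using MvPolynomial.le_totalDegree hv

/-- The 3D compact 27-point scheme reproduces the Laplacian exactly on
polynomials of total degree at most 3. -/
theorem twentyseven_point_exact_on_cubics (p : MvPolynomial (Fin 3) ℝ)
    (hp : p.totalDegree ≤ 3) (h : ℝ) (hh : 0 < h) (x y z : ℝ) :
    let u : ℝ → ℝ → ℝ → ℝ := fun a b c => MvPolynomial.eval ![a, b, c] p
    let O : Finset (ℤ × ℤ × ℤ) :=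
      ({-1, 0, 1} : Finset ℤ) ×ˢ ({-1, 0, 1} : Finset ℤ) ×ˢ ({-1, 0, 1} : Finset ℤ)
    (-(25 / (6 * h ^ 2)) * u x y z
        + (5 / (12 * h ^ 2)) *
            ∑ q ∈ O.filter (fun q => |q.1| + |q.2.1| + |q.2.2| = 1),
              u (x + h * q.1) (y + h * q.2.1) (z + h * q.2.2)
        + (1 / (8 * h ^ 2)) *
            ∑ q ∈ O.filter (fun q => |q.1| + |q.2.1| + |q.2.2| = 2),
              u (x + h * q.1) (y + h * q.2.1) (z + h * q.2.2)
        + (1 / (48 * h ^ 2)) *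
            ∑ q ∈ O.filter (fun q => |q.1| + |q.2.1| + |q.2.2| = 3),
              u (x + h * q.1) (y + h * q.2.1) (z + h * q.2.2)
      = deriv (fun s => deriv (fun t => u t y z) s) x
          + deriv (fun s => deriv (fun t => u x t z) s) y
          + deriv (fun s => deriv (fun t => u x y t) s) z ) := by
  intro u O
  have hu : u = fun s t r => ∑ v ∈ p.support, p.coeff v * (s ^ v 0 * t ^ v 1 * r ^ v 2) :=
    funext₃ (eval_fin_three_eq_sum_monomials p)
  show stencil27 h u x y z = laplacian3 u x y z
  rw [hu, stencil27_sum, laplacian3_sum]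
  refine Finset.sum_congr rfl fun v hv => ?_
  rw [stencil27_monomial_eq_laplacian3 hh.ne' ((exponents_sum_le_totalDegree hv).trans hp)]
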